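/- arXiv:math/0601626 — 2 statements merged into one kernel-verified Lean document; each statement's English description precedes it below -/
import Mathlib

section
/- For all nonnegative integers m and n, the following identity holds in the polynomial ring ℤ[z]: ∑_{i=0}^{m} (-1)^i C(n+i,i) (1+z)^{n+1} z^{m-i} − (-1)^m ∑_{i=0}^{n} C(m+i,i) (1+z)^i z^{n-i} = z^{m+n+1}. -/
open Polynomial Finset

noncomputable def Saux (m n : ℕ) : Polynomial ℤ :=
  ∑ i ∈ range (n + 1), ((m + i).choose i : ℤ) • ((1 + X) ^ i * X ^ (n - i))

lemma Saux_rec (m n : ℕ) :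
    Saux m (n + 1) = X * Saux m n + ((m + n + 1).choose (n + 1) : ℤ) • (1 + X) ^ (n + 1) := by
  unfold Saux
  rw [Finset.sum_range_succ, Finset.mul_sum]
  have h1 : ∀ i ∈ range (n + 1),
      ((m + i).choose i : ℤ) • ((1 + X : Polynomial ℤ) ^ i * X ^ (n + 1 - i))
        = X * (((m + i).choose i : ℤ) • ((1 + X : Polynomial ℤ) ^ i * X ^ (n - i))) := by
    intro i hi
    have hi' : i ≤ n := by simpa [Nat.lt_succ_iff] using hi
    have : n + 1 - i = (n - i) + 1 := by omega
    rw [this, pow_succ]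
    simp only [zsmul_eq_mul]
    ring
  rw [Finset.sum_congr rfl h1]
  have : m + (n + 1) = m + n + 1 := by ring
  simp [this]

lemma Saux_L (m n : ℕ) :
    (((m + n + 1).choose n : ℤ)) • (1 + X) ^ (n + 1) = Saux (m + 1) n + X * Saux m n := by
  induction n with
  | zero => simp [Saux]
  | succ n ih =>
    rw [Saux_rec, Saux_rec]
    have h1 : m + 1 + n + 1 = m + n + 2 := by ring
    have h2 : m + n + 1 + 1 = m + n + 2 := by ring
    have h3 : m + (n + 1) + 1 = m + n + 2 := by ring
    rw [h1, h2, h3]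
    have pascal : (((m + n + 2).choose (n + 1) : ℤ) : Polynomial ℤ)
        = (((m + n + 1).choose n : ℤ) : Polynomial ℤ)
          + (((m + n + 1).choose (n + 1) : ℤ) : Polynomial ℤ) := by
      have h := Nat.choose_succ_succ (m + n + 1) n
      have h2 : (m + n + 2) = (m + n + 1) + 1 := by ring
      rw [h2, h]
      push_cast
      ring
    simp only [zsmul_eq_mul] at ih ⊢
    linear_combination (X : Polynomial ℤ) * ih + X * (1 + X : Polynomial ℤ) ^ (n + 1) * pascal

lemma Saux_geom (n : ℕ) : (1 + X : Polynomial ℤ) ^ (n + 1) - Saux 0 n = X ^ (n + 1) := by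
  induction n with
  | zero => norm_num [Saux]
  | succ n ih =>
    rw [Saux_rec]
    have h0 : ((0 + n + 1).choose (n + 1) : ℤ) = 1 := by
      rw [show 0 + n + 1 = n + 1 by ring, Nat.choose_self]
      exact Nat.cast_one
    rw [h0]
    simp only [zsmul_eq_mul] at *
    push_cast
    linear_combination (X : Polynomial ℤ) * ih

theorem stmt0 (m n : ℕ) :
    (∑ i ∈ range (m + 1), (-1 : Polynomial ℤ) ^ i * ((n + i).choose i : ℤ) •
        ((1 + X) ^ (n + 1) * X ^ (m - i)))
      - (-1 : Polynomial ℤ) ^ m * ∑ i ∈ range (n + 1),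
          ((m + i).choose i : ℤ) • ((1 + X) ^ i * X ^ (n - i))
    = X ^ (m + n + 1) := by
  induction m with
  | zero =>
    have h := Saux_geom n
    simp only [Saux, zsmul_eq_mul, Nat.zero_add, Nat.choose_self, Nat.cast_one,
      Int.cast_one, one_mul] at h
    simp only [zsmul_eq_mul, Nat.zero_add, Nat.choose_self, Finset.sum_range_one, pow_zero,
      one_mul, mul_one, Nat.sub_self, Nat.add_zero, Nat.choose_zero_right, Nat.cast_one,
      Int.cast_one]
    linear_combination h
  | succ m ih =>
    rw [Finset.sum_range_succ]
    have h1 : ∀ i ∈ range (m + 1),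
        (-1 : Polynomial ℤ) ^ i * ((n + i).choose i : ℤ) •
          ((1 + X : Polynomial ℤ) ^ (n + 1) * X ^ (m + 1 - i))
        = X * ((-1 : Polynomial ℤ) ^ i * ((n + i).choose i : ℤ) •
          ((1 + X : Polynomial ℤ) ^ (n + 1) * X ^ (m - i))) := by
      intro i hi
      have hi' : i ≤ m := by simpa [Nat.lt_succ_iff] using hi
      have : m + 1 - i = (m - i) + 1 := by omega
      rw [this, pow_succ]
      simp only [zsmul_eq_mul]
      ring
    rw [Finset.sum_congr rfl h1, ← Finset.mul_sum]
    have hsymm : ((n + (m + 1)).choose (m + 1)) = ((m + n + 1).choose n) := by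
      have h := Nat.choose_symm (show m + 1 ≤ n + m + 1 by omega)
      rw [show n + m + 1 - (m + 1) = n by omega] at h
      rw [show n + (m + 1) = n + m + 1 by ring, ← h, show m + n + 1 = n + m + 1 by ring]
    rw [hsymm, Nat.sub_self, pow_zero, mul_one]
    have hX : (X : Polynomial ℤ) ^ (m + 1 + n + 1) = X * X ^ (m + n + 1) := by
      rw [show m + 1 + n + 1 = (m + n + 1) + 1 by ring, pow_succ]
      ring
    rw [hX]
    have hL := Saux_L m n
    simp only [Saux, zsmul_eq_mul] at hL
    simp only [zsmul_eq_mul] at ih ⊢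
    linear_combination (X : Polynomial ℤ) * ih + (-1 : Polynomial ℤ) ^ (m + 1) * hL
end

section
/- For all nonnegative integers m and n, the following identity holds in the polynomial ring ℤ[z₁,z₂]: ∑_{i=0}^{n} (-1)^i C(m+i,i) [ ∑_{j=0}^{n-i} C(m+i+j, j) ( ∑_{l=0}^{i} C(i,l) z₂^{j+l} ) z₁^{n-j-i} − z₁^{n-i} ] = 0. -/
/-!
The inner sum over `l` is `y ^ j * (y + 1) ^ i`. Collecting the double sum along the
diagonals `i + j = k`, the coefficient of `x ^ (n - k)` becomes, via
`C(m+i,i) C(m+k,k-i) = C(m+k,k) C(k,i)`, the binomial expansion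
`C(m+k,k) (y - (y + 1)) ^ k = (-1) ^ k C(m+k,k)`, which is exactly the coefficient of
`x ^ (n - k)` in the subtracted sum.
-/

open Finset MvPolynomial

theorem Nat.add_choose_mul_add_choose_sub {m k i : ℕ} (hik : i ≤ k) :
    (m + i).choose i * (m + k).choose (k - i) = (m + k).choose k * k.choose i := by
  have h := Nat.choose_mul (n := m + k) (Nat.sub_le k i)
  rw [Nat.choose_symm hik, show m + k - (k - i) = m + i by omega,
    show k - (k - i) = i by omega] at h
  rw [h, mul_comm]

theorem sum_range_choose_mul_pow_add {R : Type*} [CommSemiring R] (y : R) (i j : ℕ) :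
    ∑ l ∈ range (i + 1), (i.choose l : R) * y ^ (j + l) = y ^ j * (y + 1) ^ i := by
  rw [add_pow, mul_sum]
  refine sum_congr rfl fun l _ => ?_
  rw [one_pow, mul_one, pow_add]
  ring

theorem alternating_sum_add_choose_mul_add_choose_sub {R : Type*} [CommRing R] (y : R)
    (m k : ℕ) :
    ∑ i ∈ range (k + 1), (-1 : R) ^ i * (m + i).choose i * (m + k).choose (k - i) *
        (y ^ (k - i) * (y + 1) ^ i) = (-1) ^ k * (m + k).choose k := by
  calc ∑ i ∈ range (k + 1), (-1 : R) ^ i * (m + i).choose i * (m + k).choose (k - i) *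
        (y ^ (k - i) * (y + 1) ^ i)
      = (m + k).choose k * ∑ i ∈ range (k + 1), (-(y + 1)) ^ i * y ^ (k - i) * k.choose i := by
        rw [mul_sum]
        refine sum_congr rfl fun i hi => ?_
        have hc := congrArg (Nat.cast (R := R))
          (Nat.add_choose_mul_add_choose_sub (m := m) (Nat.lt_succ_iff.mp (mem_range.mp hi)))
        push_cast at hc
        rw [neg_pow (y + 1)]
        linear_combination ((-1 : R) ^ i * y ^ (k - i) * (y + 1) ^ i) * hc
    _ = (-1) ^ k * (m + k).choose k := by
        rw [← add_pow, show -(y + 1) + y = -1 by ring, mul_comm]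

theorem sum_alternating_add_choose_smul_sub_eq_zero {R : Type*} [CommRing R] (x y : R)
    (m n : ℕ) :
    ∑ i ∈ range (n + 1), (-1 : R) ^ i * ((m + i).choose i : ℤ) •
      ((∑ j ∈ range (n - i + 1), ((m + i + j).choose j : ℤ) •
          ((∑ l ∈ range (i + 1), (i.choose l : ℤ) • y ^ (j + l)) * x ^ (n - j - i)))
        - x ^ (n - i)) = 0 := by
  simp only [zsmul_eq_mul, Int.cast_natCast, sum_range_choose_mul_pow_add, mul_sub,
    sum_sub_distrib, sub_eq_zero, mul_sum]
  calc ∑ i ∈ range (n + 1), ∑ j ∈ range (n - i + 1), (-1 : R) ^ i * ((m + i).choose i *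
        ((m + i + j).choose j * (y ^ j * (y + 1) ^ i * x ^ (n - j - i))))
      = ∑ i ∈ range (n + 1), ∑ j ∈ range (n + 1 - i), (-1 : R) ^ i * ((m + i).choose i *
        ((m + i + j).choose j * (y ^ j * (y + 1) ^ i * x ^ (n - j - i)))) := by
        refine sum_congr rfl fun i hi => ?_
        rw [Nat.sub_add_comm (Nat.lt_succ_iff.mp (mem_range.mp hi))]
    _ = ∑ k ∈ range (n + 1), ∑ i ∈ range (k + 1), (-1 : R) ^ i * (m + i).choose i *
        (m + k).choose (k - i) * (y ^ (k - i) * (y + 1) ^ i) * x ^ (n - k) := by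
        rw [← sum_range_diag_flip]
        refine sum_congr rfl fun k _ => sum_congr rfl fun i hi => ?_
        have hik := Nat.lt_succ_iff.mp (mem_range.mp hi)
        rw [show m + i + (k - i) = m + k by omega, show n - (k - i) - i = n - k by omega]
        ring
    _ = ∑ k ∈ range (n + 1), (-1 : R) ^ k * ((m + k).choose k * x ^ (n - k)) := by
        refine sum_congr rfl fun k _ => ?_
        rw [← sum_mul, alternating_sum_add_choose_mul_add_choose_sub, mul_assoc]

theorem stmt1 (m n : ℕ) :
    ∑ i ∈ range (n + 1), (-1 : MvPolynomial (Fin 2) ℤ) ^ i * ((m + i).choose i : ℤ) •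
      ((∑ j ∈ range (n - i + 1), ((m + i + j).choose j : ℤ) •
          ((∑ l ∈ range (i + 1), (i.choose l : ℤ) • (X 1 : MvPolynomial (Fin 2) ℤ) ^ (j + l)) *
            (X 0 : MvPolynomial (Fin 2) ℤ) ^ (n - j - i)))
        - (X 0 : MvPolynomial (Fin 2) ℤ) ^ (n - i)) = 0 :=
  sum_alternating_add_choose_smul_sub_eq_zero (X 0) (X 1) m n
end
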